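/- Let μ > 0 and λ be real constants with λ + 2μ > 0. Let U ⊆ ℝ² be open and let u : U → ℝ² be smooth with 𝓛₀u := μΔu + (λ+μ)∇(div u) = 0 on U. Define the vector field W̃_u(x) := x₁ Δu(x) + 2(∂₂u₂(x), −∂₂u₁(x)). Then W̃_u is componentwise harmonic on U, i.e. Δ(W̃_u) = 0 on U. -/

import Mathlib

noncomputable section

open Real

/-- The Euclidean plane. -/
abbrev E2 : Type := EuclideanSpace ℝ (Fin 2)

/-- Partial derivative `∂ᵢf` (with `i = 0` corresponding to `∂₁`). -/
noncomputable def pd (i : Fin 2) (f : E2 → ℝ) (x : E2) : ℝ :=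
  fderiv ℝ f x (EuclideanSpace.single i 1)

/-- Laplacian of a scalar function. -/
noncomputable def lap (f : E2 → ℝ) (x : E2) : ℝ :=
  pd 0 (pd 0 f) x + pd 1 (pd 1 f) x

/-- Divergence `div u = ∂₁u₁ + ∂₂u₂`. -/
noncomputable def divg (u : E2 → Fin 2 → ℝ) (x : E2) : ℝ :=
  pd 0 (fun y => u y 0) x + pd 1 (fun y => u y 1) x

/-- The Lamé operator `𝓛₀u = μΔu + (λ+μ)∇(div u)`, `i`-th component. -/
noncomputable def lame (μ lam : ℝ) (u : E2 → Fin 2 → ℝ) (x : E2) (i : Fin 2) : ℝ :=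
  μ * lap (fun y => u y i) x + (lam + μ) * pd i (divg u) x

lemma pd_contDiffOn {f : E2 → ℝ} {U : Set E2} (hU : IsOpen U)
    (hf : ContDiffOn ℝ (⊤ : ℕ∞) f U) (i : Fin 2) : ContDiffOn ℝ (⊤ : ℕ∞) (pd i f) U := by
  have h1 : ContDiffOn ℝ (⊤ : ℕ∞) (fderiv ℝ f) U := hf.fderiv_of_isOpen hU (by simp)
  have h2 : ContDiff ℝ (⊤ : ℕ∞) (ContinuousLinearMap.apply ℝ ℝ (EuclideanSpace.single i (1:ℝ)) :
      (E2 →L[ℝ] ℝ) → ℝ) := (ContinuousLinearMap.apply ℝ ℝ (EuclideanSpace.single i (1:ℝ))).contDiff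
  exact h2.comp_contDiffOn h1

lemma diffAt {f : E2 → ℝ} {U : Set E2} (hU : IsOpen U) (hf : ContDiffOn ℝ (⊤ : ℕ∞) f U)
    {x : E2} (hx : x ∈ U) : DifferentiableAt ℝ f x :=
  (hf.contDiffAt (hU.mem_nhds hx)).differentiableAt (by simp)

lemma pd_congr {f g : E2 → ℝ} {U : Set E2} (hU : IsOpen U) {x : E2} (hx : x ∈ U)
    (h : ∀ y ∈ U, f y = g y) (i : Fin 2) : pd i f x = pd i g x := by
  have : f =ᶠ[nhds x] g := by
    filter_upwards [hU.mem_nhds hx] with y hy using h y hy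
  unfold pd; rw [this.fderiv_eq]

lemma pd_zero (i : Fin 2) (x : E2) : pd i (fun _ => (0:ℝ)) x = 0 := by
  unfold pd; simp

lemma pd_add {f g : E2 → ℝ} {x : E2} (hf : DifferentiableAt ℝ f x)
    (hg : DifferentiableAt ℝ g x) (i : Fin 2) :
    pd i (fun y => f y + g y) x = pd i f x + pd i g x := by
  unfold pd; rw [fderiv_fun_add hf hg]; rfl

lemma pd_sub {f g : E2 → ℝ} {x : E2} (hf : DifferentiableAt ℝ f x)
    (hg : DifferentiableAt ℝ g x) (i : Fin 2) :
    pd i (fun y => f y - g y) x = pd i f x - pd i g x := by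
  unfold pd; rw [fderiv_fun_sub hf hg]; rfl

lemma pd_const_mul {f : E2 → ℝ} {x : E2} (hf : DifferentiableAt ℝ f x) (c : ℝ) (i : Fin 2) :
    pd i (fun y => c * f y) x = c * pd i f x := by
  unfold pd; rw [fderiv_const_mul hf]; rfl

lemma coord_contDiff : ContDiff ℝ (⊤ : ℕ∞) (fun y : E2 => y 0) :=
  (EuclideanSpace.proj (0 : Fin 2) : E2 →L[ℝ] ℝ).contDiff

lemma pd_coord_mul {f : E2 → ℝ} {x : E2} (hf : DifferentiableAt ℝ f x) (i : Fin 2) :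
    pd i (fun y => y 0 * f y) x
      = (EuclideanSpace.single i (1:ℝ)) 0 * f x + x 0 * pd i f x := by
  have hc : DifferentiableAt ℝ (fun y : E2 => y 0) x :=
    (EuclideanSpace.proj (0 : Fin 2) : E2 →L[ℝ] ℝ).differentiableAt
  unfold pd
  rw [fderiv_fun_mul hc hf]
  have : fderiv ℝ (fun y : E2 => y 0) x = (EuclideanSpace.proj (0 : Fin 2) : E2 →L[ℝ] ℝ) :=
    (EuclideanSpace.proj (0 : Fin 2) : E2 →L[ℝ] ℝ).fderiv
  simp [this]
  ring

lemma pd_comm {f : E2 → ℝ} {U : Set E2} (hU : IsOpen U) (hf : ContDiffOn ℝ (⊤ : ℕ∞) f U)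
    {x : E2} (hx : x ∈ U) (i j : Fin 2) : pd i (pd j f) x = pd j (pd i f) x := by
  have hca : ContDiffAt ℝ (⊤ : ℕ∞) f x := hf.contDiffAt (hU.mem_nhds hx)
  have hsymm := hca.isSymmSndFDerivAt (by rw [minSmoothness_of_isRCLikeNormedField]; exact WithTop.coe_le_coe.2 (le_top : (2 : ℕ∞) ≤ ⊤))
  have hd : DifferentiableAt ℝ (fderiv ℝ f) x :=
    ((hf.fderiv_of_isOpen (m := (⊤ : ℕ∞)) hU (by simp)).contDiffAt (hU.mem_nhds hx)).differentiableAt (by simp)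
  have key : ∀ a b : Fin 2, pd a (pd b f) x
      = fderiv ℝ (fderiv ℝ f) x (EuclideanSpace.single a 1) (EuclideanSpace.single b 1) := by
    intro a b
    rw [show pd a (pd b f) x = fderiv ℝ (fun y => (fderiv ℝ f y) (EuclideanSpace.single b 1)) x
      (EuclideanSpace.single a 1) from rfl]
    rw [fderiv_clm_apply hd (differentiableAt_const _)]
    simp
  rw [key i j, key j i, hsymm]

lemma lap_contDiffOn {f : E2 → ℝ} {U : Set E2} (hU : IsOpen U)
    (hf : ContDiffOn ℝ (⊤ : ℕ∞) f U) : ContDiffOn ℝ (⊤ : ℕ∞) (lap f) U :=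
  (pd_contDiffOn hU (pd_contDiffOn hU hf 0) 0).add (pd_contDiffOn hU (pd_contDiffOn hU hf 1) 1)

lemma lap_congr {f g : E2 → ℝ} {U : Set E2} (hU : IsOpen U) {x : E2} (hx : x ∈ U)
    (h : ∀ y ∈ U, f y = g y) : lap f x = lap g x := by
  have h0 : ∀ y ∈ U, pd 0 f y = pd 0 g y := fun y hy => pd_congr hU hy h 0
  have h1 : ∀ y ∈ U, pd 1 f y = pd 1 g y := fun y hy => pd_congr hU hy h 1
  unfold lap
  rw [pd_congr hU hx h0 0, pd_congr hU hx h1 1]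

lemma lap_add {f g : E2 → ℝ} {U : Set E2} (hU : IsOpen U)
    (hf : ContDiffOn ℝ (⊤ : ℕ∞) f U) (hg : ContDiffOn ℝ (⊤ : ℕ∞) g U) {x : E2} (hx : x ∈ U) :
    lap (fun y => f y + g y) x = lap f x + lap g x := by
  have key : ∀ j : Fin 2, pd j (pd j (fun y => f y + g y)) x
      = pd j (pd j f) x + pd j (pd j g) x := by
    intro j
    have h1 : ∀ y ∈ U, pd j (fun y => f y + g y) y = pd j f y + pd j g y :=
      fun y hy => pd_add (diffAt hU hf hy) (diffAt hU hg hy) j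
    rw [pd_congr hU hx h1 j,
      pd_add (diffAt hU (pd_contDiffOn hU hf j) hx) (diffAt hU (pd_contDiffOn hU hg j) hx) j]
  unfold lap; rw [key 0, key 1]; ring

lemma lap_sub {f g : E2 → ℝ} {U : Set E2} (hU : IsOpen U)
    (hf : ContDiffOn ℝ (⊤ : ℕ∞) f U) (hg : ContDiffOn ℝ (⊤ : ℕ∞) g U) {x : E2} (hx : x ∈ U) :
    lap (fun y => f y - g y) x = lap f x - lap g x := by
  have key : ∀ j : Fin 2, pd j (pd j (fun y => f y - g y)) x
      = pd j (pd j f) x - pd j (pd j g) x := by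
    intro j
    have h1 : ∀ y ∈ U, pd j (fun y => f y - g y) y = pd j f y - pd j g y :=
      fun y hy => pd_sub (diffAt hU hf hy) (diffAt hU hg hy) j
    rw [pd_congr hU hx h1 j,
      pd_sub (diffAt hU (pd_contDiffOn hU hf j) hx) (diffAt hU (pd_contDiffOn hU hg j) hx) j]
  unfold lap; rw [key 0, key 1]; ring

lemma lap_const_mul {f : E2 → ℝ} {U : Set E2} (hU : IsOpen U)
    (hf : ContDiffOn ℝ (⊤ : ℕ∞) f U) {x : E2} (hx : x ∈ U) (c : ℝ) :
    lap (fun y => c * f y) x = c * lap f x := by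
  have key : ∀ j : Fin 2, pd j (pd j (fun y => c * f y)) x = c * pd j (pd j f) x := by
    intro j
    have h1 : ∀ y ∈ U, pd j (fun y => c * f y) y = c * pd j f y :=
      fun y hy => pd_const_mul (diffAt hU hf hy) c j
    rw [pd_congr hU hx h1 j, pd_const_mul (diffAt hU (pd_contDiffOn hU hf j) hx) c j]
  unfold lap; rw [key 0, key 1]; ring

lemma lap_coord_mul {f : E2 → ℝ} {U : Set E2} (hU : IsOpen U)
    (hf : ContDiffOn ℝ (⊤ : ℕ∞) f U) {x : E2} (hx : x ∈ U) :
    lap (fun y => y 0 * f y) x = x 0 * lap f x + 2 * pd 0 f x := by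
  have h1 : ∀ y ∈ U, pd 0 (fun w => w 0 * f w) y = f y + y 0 * pd 0 f y := by
    intro y hy
    rw [pd_coord_mul (diffAt hU hf hy) 0]
    norm_num [EuclideanSpace.single_apply]
  have h2 : ∀ y ∈ U, pd 1 (fun w => w 0 * f w) y = y 0 * pd 1 f y := by
    intro y hy
    rw [pd_coord_mul (diffAt hU hf hy) 1]
    norm_num [EuclideanSpace.single_apply]
  have hprod0 : DifferentiableAt ℝ (fun y : E2 => y 0 * pd 0 f y) x :=
    ((coord_contDiff.differentiable (by simp)) x).mul (diffAt hU (pd_contDiffOn hU hf 0) hx)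
  unfold lap
  rw [pd_congr hU hx h1 0, pd_congr hU hx h2 1,
    pd_add (diffAt hU hf hx) hprod0 0,
    pd_coord_mul (diffAt hU (pd_contDiffOn hU hf 0) hx) 0,
    pd_coord_mul (diffAt hU (pd_contDiffOn hU hf 1) hx) 1]
  norm_num [EuclideanSpace.single_apply]
  ring

lemma lap_pd {f : E2 → ℝ} {U : Set E2} (hU : IsOpen U)
    (hf : ContDiffOn ℝ (⊤ : ℕ∞) f U) {x : E2} (hx : x ∈ U) (j : Fin 2) :
    lap (pd j f) x = pd j (lap f) x := by
  have key : ∀ i : Fin 2, pd i (pd i (pd j f)) x = pd j (pd i (pd i f)) x := by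
    intro i
    have h1 : ∀ y ∈ U, pd i (pd j f) y = pd j (pd i f) y :=
      fun y hy => pd_comm hU hf hy i j
    rw [pd_congr hU hx h1 i]
    exact pd_comm hU (pd_contDiffOn hU hf i) hx i j
  have hsum : pd j (lap f) x = pd j (pd 0 (pd 0 f)) x + pd j (pd 1 (pd 1 f)) x :=
    pd_add (diffAt hU (pd_contDiffOn hU (pd_contDiffOn hU hf 0) 0) hx)
      (diffAt hU (pd_contDiffOn hU (pd_contDiffOn hU hf 1) 1) hx) j
  unfold lap
  rw [key 0, key 1]; exact hsum.symm

/-! ### Main theorem -/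

/-- For a smooth solution of the Lamé equation `𝓛₀u = 0` on an open set `U ⊆ ℝ²`,
the vector field `W̃_u(x) = x₁ Δu(x) + 2(∂₂u₂(x), −∂₂u₁(x))` is componentwise
harmonic on `U`. -/
theorem Wtilde_harmonic
    (μ lam : ℝ) (hμ : 0 < μ) (hlam : 0 < lam + 2 * μ)
    (U : Set E2) (hU : IsOpen U)
    (u : E2 → Fin 2 → ℝ) (hu : ContDiffOn ℝ (⊤ : ℕ∞) u U)
    (hlame : ∀ x ∈ U, ∀ i : Fin 2, lame μ lam u x i = 0)
    (Wt : E2 → Fin 2 → ℝ)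
    (hWt0 : ∀ x : E2, Wt x 0 = x 0 * lap (fun y => u y 0) x + 2 * pd 1 (fun y => u y 1) x)
    (hWt1 : ∀ x : E2, Wt x 1 = x 0 * lap (fun y => u y 1) x - 2 * pd 1 (fun y => u y 0) x) :
    ∀ x ∈ U, ∀ i : Fin 2, lap (fun y => Wt y i) x = 0 := by
  have hμ' : μ ≠ 0 := ne_of_gt hμ
  -- components are smooth
  have hui : ∀ i : Fin 2, ContDiffOn ℝ (⊤ : ℕ∞) (fun y => u y i) U := by
    intro i
    exact (ContinuousLinearMap.proj (R := ℝ) (φ := fun _ : Fin 2 => ℝ) i).contDiff.comp_contDiffOn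
      hu
  -- divergence is smooth
  have hθ : ContDiffOn ℝ (⊤ : ℕ∞) (divg u) U :=
    (pd_contDiffOn hU (hui 0) 0).add (pd_contDiffOn hU (hui 1) 1)
  -- the Lamé equations, pointwise
  have hL : ∀ i : Fin 2, ∀ y ∈ U,
      μ * lap (fun z => u z i) y = -(lam + μ) * pd i (divg u) y := by
    intro i y hy
    have := hlame y hy i
    unfold lame at this
    linarith
  -- first derivatives of the Lamé equations
  have hpdL : ∀ i j : Fin 2, ∀ y ∈ U,
      μ * pd j (lap (fun z => u z i)) y = -(lam + μ) * pd j (pd i (divg u)) y := by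
    intro i j y hy
    have h1 : ∀ z ∈ U, (fun w => μ * lap (fun z' => u z' i) w) z
        = (fun w => -(lam + μ) * pd i (divg u) w) z := fun z hz => hL i z hz
    have h2 := pd_congr hU hy h1 j
    rwa [pd_const_mul (diffAt hU (lap_contDiffOn hU (hui i)) hy) μ j,
      pd_const_mul (diffAt hU (pd_contDiffOn hU hθ i) hy) _ j] at h2
  -- the divergence is harmonic
  have hlapθ : ∀ y ∈ U, lap (divg u) y = 0 := by
    intro y hy
    have e : lap (divg u) y
        = pd 0 (lap (fun z => u z 0)) y + pd 1 (lap (fun z => u z 1)) y := by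
      have a0 : lap (divg u) y
          = lap (pd 0 (fun z => u z 0)) y + lap (pd 1 (fun z => u z 1)) y :=
        lap_add hU (pd_contDiffOn hU (hui 0) 0) (pd_contDiffOn hU (hui 1) 1) hy
      rw [a0, lap_pd hU (hui 0) hy 0, lap_pd hU (hui 1) hy 1]
    have e2 : lap (divg u) y = pd 0 (pd 0 (divg u)) y + pd 1 (pd 1 (divg u)) y := rfl
    have h0 := hpdL 0 0 y hy
    have h1 := hpdL 1 1 y hy
    have key : (lam + 2 * μ) * lap (divg u) y = 0 := by
      linear_combination h0 + h1 + μ * e + (lam + μ) * e2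
    have := mul_eq_zero.1 key
    rcases this with h | h
    · exact absurd h (ne_of_gt hlam)
    · exact h
  -- each lap uᵢ is harmonic (u is biharmonic)
  have hbih : ∀ i : Fin 2, ∀ y ∈ U, lap (lap (fun z => u z i)) y = 0 := by
    intro i y hy
    have e1 : lap (fun w => μ * lap (fun z => u z i) w) y
        = lap (fun w => -(lam + μ) * pd i (divg u) w) y :=
      lap_congr hU hy (hL i)
    rw [lap_const_mul hU (lap_contDiffOn hU (hui i)) hy μ,
      lap_const_mul hU (pd_contDiffOn hU hθ i) hy _,
      lap_pd hU hθ hy i] at e1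
    have hz : pd i (lap (divg u)) y = 0 := by
      have := pd_congr hU hy (fun z hz => hlapθ z hz) i
      rwa [pd_zero] at this
    rw [hz, mul_zero] at e1
    exact (mul_eq_zero.1 e1).resolve_left hμ'
  -- mixed identity, first component
  have hmix0 : ∀ y ∈ U,
      pd 0 (lap (fun z => u z 0)) y + lap (pd 1 (fun z => u z 1)) y = 0 := by
    intro y hy
    rw [lap_pd hU (hui 1) hy 1]
    have h0 := hpdL 0 0 y hy
    have h1 := hpdL 1 1 y hy
    have e2 : lap (divg u) y = pd 0 (pd 0 (divg u)) y + pd 1 (pd 1 (divg u)) y := rfl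
    have hz := hlapθ y hy
    have key : μ * (pd 0 (lap (fun z => u z 0)) y + pd 1 (lap (fun z => u z 1)) y) = 0 := by
      linear_combination h0 + h1 + (lam + μ) * e2 - (lam + μ) * hz
    exact (mul_eq_zero.1 key).resolve_left hμ'
  -- mixed identity, second component
  have hmix1 : ∀ y ∈ U,
      pd 0 (lap (fun z => u z 1)) y - lap (pd 1 (fun z => u z 0)) y = 0 := by
    intro y hy
    rw [lap_pd hU (hui 0) hy 1]
    have h0 := hpdL 1 0 y hy
    have h1 := hpdL 0 1 y hy
    have hc := pd_comm hU hθ hy 0 1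
    have key : μ * (pd 0 (lap (fun z => u z 1)) y - pd 1 (lap (fun z => u z 0)) y) = 0 := by
      linear_combination h0 - h1 - (lam + μ) * hc
    exact (mul_eq_zero.1 key).resolve_left hμ'
  -- conclusion
  intro x hx i
  fin_cases i
  · show lap (fun y => Wt y 0) x = 0
    have hfeq : (fun y => Wt y 0)
        = fun y => y 0 * lap (fun z => u z 0) y + 2 * pd 1 (fun z => u z 1) y :=
      funext hWt0
    rw [hfeq]
    have hsm1 : ContDiffOn ℝ (⊤ : ℕ∞) (fun y : E2 => y 0 * lap (fun z => u z 0) y) U :=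
      (coord_contDiff.contDiffOn).mul (lap_contDiffOn hU (hui 0))
    have hsm2 : ContDiffOn ℝ (⊤ : ℕ∞) (fun y : E2 => 2 * pd 1 (fun z => u z 1) y) U :=
      (contDiffOn_const).mul (pd_contDiffOn hU (hui 1) 1)
    rw [lap_add hU hsm1 hsm2 hx,
      lap_coord_mul hU (lap_contDiffOn hU (hui 0)) hx,
      lap_const_mul hU (pd_contDiffOn hU (hui 1) 1) hx 2,
      hbih 0 x hx]
    have := hmix0 x hx
    linarith
  · show lap (fun y => Wt y 1) x = 0
    have hfeq : (fun y => Wt y 1)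
        = fun y => y 0 * lap (fun z => u z 1) y - 2 * pd 1 (fun z => u z 0) y :=
      funext hWt1
    rw [hfeq]
    have hsm1 : ContDiffOn ℝ (⊤ : ℕ∞) (fun y : E2 => y 0 * lap (fun z => u z 1) y) U :=
      (coord_contDiff.contDiffOn).mul (lap_contDiffOn hU (hui 1))
    have hsm2 : ContDiffOn ℝ (⊤ : ℕ∞) (fun y : E2 => 2 * pd 1 (fun z => u z 0) y) U :=
      (contDiffOn_const).mul (pd_contDiffOn hU (hui 0) 1)
    rw [lap_sub hU hsm1 hsm2 hx,
      lap_coord_mul hU (lap_contDiffOn hU (hui 1)) hx,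
      lap_const_mul hU (pd_contDiffOn hU (hui 0) 1) hx 2,
      hbih 1 x hx]
    have := hmix1 x hx
    linarith
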